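/- arXiv:1812.08615 — 3 statements merged into one kernel-verified Lean document; each statement's English description precedes it below -/
import Mathlib

section
/- Let M be a maximal γ-matching of a link stream L with the greedy property: whenever Γ_γ(t,u,v) is a γ-edge of L whose temporal vertices are all disjoint from bot-and-earlier temporal vertices of γ-edges of M starting at times ≤ t, then some γ-edge of M incident with u or v starts at time ≤ t. Then every γ-edge of any γ-matching M' of L contains at least one temporal vertex of bot(M). Consequently |M'| ≤ 2|M|, i.e., any maximal γ-matching produced by the time-ordered greedy algorithm is a 2-approximation of the maximum γ-matching. -/
/-- `GEdge γ E e` : the tuple `e = (t,u,v)` defines a γ-edge of the link stream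
with timed-edge relation `E` : `u ≠ v` and all timed edges `(s,{u,v})`,
`s ∈ [t, t+γ-1]`, belong to the link stream. -/
def GEdge {V : Type*} (γ : ℕ) (E : ℕ → V → V → Prop) (e : ℕ × V × V) : Prop :=
  e.2.1 ≠ e.2.2 ∧ ∀ s ∈ Finset.Icc e.1 (e.1 + γ - 1), E s e.2.1 e.2.2

/-- The γ-edge `e = (t,u,v)` contains the temporal vertex `p = (s,w)`. -/
def TV {V : Type*} (γ : ℕ) (e : ℕ × V × V) (p : ℕ × V) : Prop :=
  p.1 ∈ Finset.Icc e.1 (e.1 + γ - 1) ∧ (p.2 = e.2.1 ∨ p.2 = e.2.2)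

/-- Two γ-edges are independent: no temporal vertex is contained in both. -/
def Indep {V : Type*} (γ : ℕ) (e e' : ℕ × V × V) : Prop :=
  ∀ p : ℕ × V, ¬ (TV γ e p ∧ TV γ e' p)

/-- `M` is a γ-matching of the link stream with timed-edge relation `E`. -/
def IsMatching {V : Type*} (γ : ℕ) (E : ℕ → V → V → Prop)
    (M : Finset (ℕ × V × V)) : Prop :=
  (∀ e ∈ M, GEdge γ E e) ∧ ∀ e ∈ M, ∀ e' ∈ M, e ≠ e' → Indep γ e e'

/-- The bottom temporal vertices of `M`. -/
def botM {V : Type*} [DecidableEq V] (γ : ℕ) (M : Finset (ℕ × V × V)) :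
    Finset (ℕ × V) :=
  M.biUnion fun e => {(e.1 + γ - 1, e.2.1), (e.1 + γ - 1, e.2.2)}

/-- Greedy 2-approximation: if `M` is a (greedy-)maximal γ-matching, i.e. every
γ-edge of the link stream not in `M` conflicts with some γ-edge of `M`
starting no later, then every γ-edge of any γ-matching `M'` contains a bottom
temporal vertex of `M`, and consequently `|M'| ≤ 2|M|`. -/
theorem greedy_two_approx {V : Type*} [DecidableEq V] (γ : ℕ) (hγ : 1 ≤ γ)
    (E : ℕ → V → V → Prop) (M M' : Finset (ℕ × V × V))
    (hM : IsMatching γ E M) (hM' : IsMatching γ E M')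
    (hgreedy : ∀ e, GEdge γ E e → e ∉ M →
      ∃ e' ∈ M, e'.1 ≤ e.1 ∧ ¬ Indep γ e' e) :
    (∀ e ∈ M', ∃ p ∈ botM γ M, TV γ e p) ∧ M'.card ≤ 2 * M.card := by
  classical
  have key : ∀ e ∈ M', ∃ p ∈ botM γ M, TV γ e p := by
    intro e he
    by_cases hem : e ∈ M
    · refine ⟨(e.1 + γ - 1, e.2.1), ?_, ?_⟩
      · simp only [botM, Finset.mem_biUnion]
        exact ⟨e, hem, by simp⟩
      · exact ⟨Finset.mem_Icc.2 ⟨by omega, le_rfl⟩, Or.inl rfl⟩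
    · obtain ⟨e', he'M, hle, hni⟩ := hgreedy e (hM'.1 e he) hem
      simp only [Indep, not_forall, not_not] at hni
      obtain ⟨p, hpe', hpe⟩ := hni
      obtain ⟨hp1', hp2'⟩ := hpe'
      obtain ⟨hp1, hp2⟩ := hpe
      rw [Finset.mem_Icc] at hp1' hp1
      refine ⟨(e'.1 + γ - 1, p.2), ?_, ?_⟩
      · simp only [botM, Finset.mem_biUnion]
        refine ⟨e', he'M, ?_⟩
        rcases hp2' with h | h <;> simp [h]
      · exact ⟨Finset.mem_Icc.2 ⟨by omega, by omega⟩, hp2⟩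
  refine ⟨key, ?_⟩
  have hcard : M'.card ≤ (botM γ M).card := by
    set f : (ℕ × V × V) → ℕ × V := fun e =>
      if h : ∃ p ∈ botM γ M, TV γ e p then h.choose else (0, e.2.1) with hf
    apply Finset.card_le_card_of_injOn f
    · intro e he
      have h := key e he
      simp only [hf, dif_pos h]
      exact h.choose_spec.1
    · intro x hx y hy hxy
      by_contra hne
      have hxh := key x hx
      have hyh := key y hy
      have hx' : f x = hxh.choose := by simp only [hf, dif_pos hxh]
      have hy' : f y = hyh.choose := by simp only [hf, dif_pos hyh]
      have : TV γ x hxh.choose := hxh.choose_spec.2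
      have hty : TV γ y hxh.choose := by
        have := hyh.choose_spec.2
        rwa [← hy', ← hxy, hx'] at this
      exact hM'.2 x hx y hy hne hxh.choose ⟨hxh.choose_spec.2, hty⟩
  refine hcard.trans ?_
  calc (botM γ M).card
      ≤ ∑ e ∈ M, ({(e.1 + γ - 1, e.2.1), (e.1 + γ - 1, e.2.2)} : Finset (ℕ × V)).card :=
        Finset.card_biUnion_le
    _ ≤ ∑ e ∈ M, 2 := Finset.sum_le_sum (fun e _ =>
        (Finset.card_insert_le _ _).trans (by simp))
    _ = 2 * M.card := by rw [Finset.sum_const, smul_eq_mul, mul_comm]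
end

section
/- Let M' be a γ-matching of size k in a link stream, let Γ = Γ_γ(t',u,v) ∈ M', and let S be a set of at least 2k-1 γ-edges of the link stream all of the form Γ_γ(t',u,w) for various vertices w ≠ u. Then there exists a γ-edge Γ'' ∈ S such that (M' \ {Γ}) ∪ {Γ''} is again a γ-matching of size k. (Exchange lemma used for kernelization.) -/
/-- Exchange lemma for kernelization: if `M'` is a γ-matching of size `k`
containing `Γ = Γ_γ(t',u,v)`, and `S` is a set of at least `2k-1` γ-edges of
the link stream all of the form `Γ_γ(t',u,w)`, then some `Γ'' ∈ S` can replace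
`Γ`, giving again a γ-matching of size `k`. -/
theorem exchange_lemma {V : Type*} [DecidableEq V] (γ : ℕ) (hγ : 1 ≤ γ)
    (E : ℕ → V → V → Prop) (k : ℕ) (M' : Finset (ℕ × V × V))
    (hM' : IsMatching γ E M') (hcard : M'.card = k)
    (t' : ℕ) (u v : V) (hΓ : (t', u, v) ∈ M')
    (S : Finset (ℕ × V × V))
    (hS : ∀ e ∈ S, GEdge γ E e ∧ e.1 = t' ∧ e.2.1 = u)
    (hScard : 2 * k - 1 ≤ S.card) :
    ∃ e ∈ S, IsMatching γ E ((M' \ {(t', u, v)}) ∪ {e}) ∧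
      ((M' \ {(t', u, v)}) ∪ {e}).card = k := by
  obtain ⟨hGE, hInd⟩ := hM'
  have hsymm : ∀ a b : ℕ × V × V, Indep γ a b → Indep γ b a := by
    intro a b h p hp; exact h p ⟨hp.2, hp.1⟩
  set Γ : ℕ × V × V := (t', u, v) with hΓdef
  set M'' : Finset (ℕ × V × V) := M' \ {Γ} with hM''def
  have hM''sub : ∀ e ∈ M'', e ∈ M' ∧ e ≠ Γ := by
    intro e he
    simp only [hM''def, Finset.mem_sdiff, Finset.mem_singleton] at he
    exact he
  have hk : 1 ≤ k := by
    rw [← hcard]; exact Finset.card_pos.mpr ⟨Γ, hΓ⟩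
  have hM''card : M''.card = k - 1 := by
    rw [hM''def, Finset.card_sdiff_of_subset (Finset.singleton_subset_iff.mpr hΓ),
      Finset.card_singleton, hcard]
  -- bad vertex set
  set B : Finset V := M''.biUnion (fun e => {e.2.1, e.2.2}) with hBdef
  have hBcard : B.card ≤ 2 * k - 2 := by
    calc B.card ≤ ∑ e ∈ M'', ({e.2.1, e.2.2} : Finset V).card :=
          Finset.card_biUnion_le
      _ ≤ ∑ _e ∈ M'', 2 := by
          apply Finset.sum_le_sum
          intro e _
          exact (Finset.card_insert_le _ _).trans (by simp)
      _ = M''.card * 2 := by rw [Finset.sum_const, smul_eq_mul]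
      _ = 2 * k - 2 := by rw [hM''card]; omega
  -- find e in S with e.2.2 ∉ B
  have hinj : Set.InjOn (fun e : ℕ × V × V => e.2.2) S := by
    intro a ha b hb hab
    obtain ⟨_, ha1, ha2⟩ := hS a ha
    obtain ⟨_, hb1, hb2⟩ := hS b hb
    simp only at hab
    have ha3 : a = (a.1, a.2.1, a.2.2) := rfl
    have hb3 : b = (b.1, b.2.1, b.2.2) := rfl
    rw [ha3, hb3, ha1, ha2, hb1, hb2, hab]
  obtain ⟨e, heS, hw⟩ : ∃ e ∈ S, e.2.2 ∉ B := by
    by_contra h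
    push_neg at h
    have hsub : S.image (fun e : ℕ × V × V => e.2.2) ⊆ B := by
      intro w hwB
      obtain ⟨a, ha, rfl⟩ := Finset.mem_image.mp hwB
      exact h a ha
    have := Finset.card_le_card hsub
    rw [Finset.card_image_of_injOn hinj] at this
    omega
  obtain ⟨heGE, he1, he2⟩ := hS e heS
  have htIcc : t' ∈ Finset.Icc t' (t' + γ - 1) := by
    rw [Finset.mem_Icc]; omega
  -- e is independent of every element of M''
  have hkey : ∀ e' ∈ M'', Indep γ e e' := by
    intro e' he' p hp
    obtain ⟨he'M, he'ne⟩ := hM''sub e' he'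
    obtain ⟨⟨hp1, hp2⟩, hpe'⟩ := hp
    rw [he1] at hp1
    rcases hp2 with h2 | h2
    · -- p.2 = u : conflicts with Γ, contradiction with matching property
      rw [he2] at h2
      have hTVΓ : TV γ Γ p := ⟨hp1, Or.inl h2⟩
      exact hInd Γ hΓ e' he'M (Ne.symm he'ne) p ⟨hTVΓ, hpe'⟩
    · -- p.2 = e.2.2 : e.2.2 ∈ B, contradiction
      apply hw
      rw [hBdef, Finset.mem_biUnion]
      refine ⟨e', he', ?_⟩
      rcases hpe'.2 with h3 | h3 <;> simp [← h2, h3]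
  -- e ∉ M''
  have heM'' : e ∉ M'' := by
    intro he
    obtain ⟨heM, hene⟩ := hM''sub e he
    refine hInd e heM Γ hΓ hene (t', u) ⟨⟨?_, Or.inl he2.symm⟩, ⟨htIcc, Or.inl rfl⟩⟩
    rw [he1]; exact htIcc
  refine ⟨e, heS, ⟨?_, ?_⟩, ?_⟩
  · intro a ha
    rcases Finset.mem_union.mp ha with h | h
    · exact hGE a (hM''sub a h).1
    · rw [Finset.mem_singleton.mp h]; exact heGE
  · intro a ha b hb hab
    rcases Finset.mem_union.mp ha with h | h <;>
      rcases Finset.mem_union.mp hb with h' | h'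
    · exact hInd a (hM''sub a h).1 b (hM''sub b h').1 hab
    · rw [Finset.mem_singleton.mp h']
      exact hsymm _ _ (hkey a h)
    · rw [Finset.mem_singleton.mp h]
      exact hkey b h'
    · exact absurd ((Finset.mem_singleton.mp h).trans (Finset.mem_singleton.mp h').symm) hab
  · rw [Finset.card_union_of_disjoint (by simpa using heM''),
      Finset.card_singleton, hM''card]
    omega
end

section
/- Let γ ≥ 1, m ≥ 0, and T = [0, (m+1)γ - 1]. If a γ-matching M contains m+1 pairwise independent γ-edges all incident with a common vertex u and with time intervals contained in T, then their starting times are exactly {0, γ, 2γ, ..., mγ}. -/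
/-- If m+1 pairwise independent γ-edges, all incident with a common vertex `u`,
have time intervals contained in `T = [0,(m+1)γ-1]`, then their starting times
are exactly `{0, γ, 2γ, …, mγ}`. -/
theorem starting_times_multiples {V : Type*} (γ m : ℕ) (hγ : 1 ≤ γ) (u : V)
    (t : Fin (m + 1) → ℕ) (w : Fin (m + 1) → V) (hw : ∀ i, u ≠ w i)
    (hsub : ∀ i, Finset.Icc (t i) (t i + γ - 1) ⊆ Finset.Icc 0 ((m + 1) * γ - 1))
    (hind : ∀ i j, i ≠ j → Indep γ (t i, u, w i) (t j, u, w j)) :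
    Finset.univ.image t = (Finset.range (m + 1)).image (fun j => j * γ) := by
  simp only [Indep, TV] at hind
  -- separation of starting times
  have hsep : ∀ i j : Fin (m + 1), i ≠ j → t i + γ ≤ t j ∨ t j + γ ≤ t i := by
    intro i j hne
    by_contra hc
    push_neg at hc
    exact hind i j hne (max (t i) (t j), u)
      ⟨⟨Finset.mem_Icc.mpr ⟨le_max_left _ _, by omega⟩, Or.inl rfl⟩,
       ⟨Finset.mem_Icc.mpr ⟨le_max_right _ _, by omega⟩, Or.inl rfl⟩⟩
  have hmul : (m + 1) * γ = m * γ + γ := by ring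
  have ht : ∀ i, t i ≤ m * γ := by
    intro i
    have h1 : t i + γ - 1 ∈ Finset.Icc (t i) (t i + γ - 1) :=
      Finset.mem_Icc.mpr ⟨by omega, le_rfl⟩
    have h2 := Finset.mem_Icc.mp (hsub i h1)
    omega
  have hγpos : 0 < γ := hγ
  set g : Fin (m + 1) → Fin (m + 1) := fun i =>
    ⟨t i / γ, by
      have := Nat.div_le_div_right (c := γ) (ht i)
      rw [Nat.mul_div_cancel _ hγpos] at this
      omega⟩ with hgdef
  set h : Fin (m + 1) → Fin (m + 1) := fun i =>
    ⟨(m * γ - t i) / γ, by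
      have h0 : m * γ - t i ≤ m * γ := by omega
      have := Nat.div_le_div_right (c := γ) h0
      rw [Nat.mul_div_cancel _ hγpos] at this
      omega⟩ with hhdef
  have hdivlt : ∀ a b : ℕ, a + γ ≤ b → a / γ < b / γ := by
    intro a b hab
    have h1 : (a + γ) / γ ≤ b / γ := Nat.div_le_div_right hab
    rw [Nat.add_div_right _ hγpos] at h1
    omega
  have hginj : Function.Injective g := by
    intro i j hij
    by_contra hne
    have := hsep i j hne
    have hval : t i / γ = t j / γ := congrArg Fin.val hij
    rcases this with h1 | h1
    · have := hdivlt _ _ h1; omega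
    · have := hdivlt _ _ h1; omega
  have hhinj : Function.Injective h := by
    intro i j hij
    by_contra hne
    have hval : (m * γ - t i) / γ = (m * γ - t j) / γ := congrArg Fin.val hij
    rcases hsep i j hne with h1 | h1
    · have h2 : (m * γ - t j) + γ ≤ m * γ - t i := by
        have := ht j; omega
      have := hdivlt _ _ h2; omega
    · have h2 : (m * γ - t i) + γ ≤ m * γ - t j := by
        have := ht i; omega
      have := hdivlt _ _ h2; omega
  have hgbij : Function.Bijective g := Finite.injective_iff_bijective.mp hginj
  have hhbij : Function.Bijective h := Finite.injective_iff_bijective.mp hhinj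
  -- sums
  have hsumg : ∑ i : Fin (m + 1), ((g i : ℕ)) = ∑ x : Fin (m + 1), (x : ℕ) :=
    Fintype.sum_bijective g hgbij _ _ (fun i => rfl)
  have hsumh : ∑ i : Fin (m + 1), ((h i : ℕ)) = ∑ x : Fin (m + 1), (x : ℕ) :=
    Fintype.sum_bijective h hhbij _ _ (fun i => rfl)
  -- pointwise identity
  have hpoint : ∀ i, γ * (g i : ℕ) + γ * (h i : ℕ) + (t i % γ + (m * γ - t i) % γ)
      = m * γ := by
    intro i
    have e1 : γ * (t i / γ) + t i % γ = t i := Nat.div_add_mod (t i) γ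
    have e2 : γ * ((m * γ - t i) / γ) + (m * γ - t i) % γ = m * γ - t i :=
      Nat.div_add_mod _ γ
    have := ht i
    simp only [hgdef, hhdef]
    omega
  -- sum the identity
  have hS : ∑ i : Fin (m + 1), (γ * (g i : ℕ) + γ * (h i : ℕ)
      + (t i % γ + (m * γ - t i) % γ)) = (m + 1) * (m * γ) := by
    rw [Finset.sum_congr rfl (fun i _ => hpoint i)]
    simp [Finset.sum_const, mul_comm]
  have hgauss : (∑ x : Fin (m + 1), (x : ℕ)) * 2 = (m + 1) * m := by
    rw [Fin.sum_univ_eq_sum_range (fun i => i)]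
    simpa using Finset.sum_range_id_mul_two (m + 1)
  have hrem : ∑ i : Fin (m + 1), (t i % γ + (m * γ - t i) % γ) = 0 := by
    rw [Finset.sum_add_distrib, Finset.sum_add_distrib, ← Finset.mul_sum,
      ← Finset.mul_sum, hsumg, hsumh] at hS
    nlinarith [hgauss, hS]
  have hmod : ∀ i, t i % γ = 0 := by
    intro i
    have := Finset.sum_eq_zero_iff.mp hrem i (Finset.mem_univ i)
    omega
  have hteq : ∀ i, t i = (g i : ℕ) * γ := by
    intro i
    simp only [hgdef]
    rw [Nat.div_mul_cancel (Nat.dvd_of_mod_eq_zero (hmod i))]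
  -- conclude
  have hrange : Finset.univ.image (fun x : Fin (m + 1) => (x : ℕ)) = Finset.range (m + 1) := by
    ext a
    simp only [Finset.mem_image, Finset.mem_univ, true_and, Finset.mem_range]
    constructor
    · rintro ⟨x, rfl⟩; exact x.isLt
    · intro ha; exact ⟨⟨a, ha⟩, rfl⟩
  calc Finset.univ.image t
      = Finset.univ.image (fun i => (g i : ℕ) * γ) :=
        Finset.image_congr (fun i _ => hteq i)
    _ = (Finset.univ.image g).image (fun x : Fin (m + 1) => (x : ℕ) * γ) := by
        rw [Finset.image_image]; rfl
    _ = (Finset.univ.image (fun x : Fin (m + 1) => (x : ℕ))).image (fun j => j * γ) := by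
        rw [Finset.image_univ_of_surjective hgbij.surjective, Finset.image_image]; rfl
    _ = (Finset.range (m + 1)).image (fun j => j * γ) := by rw [hrange]
end
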